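/- arXiv:2601.10422 — 2 statements merged into one kernel-verified Lean document; each statement's English description precedes it below -/
import Mathlib

section
/- Let P be a (G,L,K,F,Z,S) MIMO-PDA whose sum-DoF attains the upper bound, i.e., K(F−Z)/S = GKZ/F + G⌈L/G⌉. Then: (i) every integer of [S] occurs exactly K(F−Z)/S times in P; (ii) every integer of [S] occurs exactly G times in every column of P in which it occurs at all; (iii) for every s in [S], every row of the subarray P^(s) contains exactly ⌈L/G⌉ integer entries; and (iv) every row of P contains exactly K(F−Z)/F integer entries. -/
open Finset

/-- Ceiling division `⌈a / b⌉` on naturals. -/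
def cdiv (a b : ℕ) : ℕ := (a + b - 1) / b

/-- `⟨a⟩_q`: the least positive residue of `a` modulo `q` when `q ∤ a`, and `q` when `q ∣ a`. -/
def modRes (a q : ℕ) : ℕ := if q ∣ a then q else a % q

section PDA

variable {α κ σ : Type*} [Fintype α] [Fintype κ] [DecidableEq σ]

/-- The set of integer symbols occurring in the array `P` (the star `*` is `none`). -/
def pdaSymbols (P : α → κ → Option σ) : Finset σ :=
  Finset.univ.biUnion fun f : α => Finset.univ.biUnion fun k : κ => (P f k).toFinset

/-- The set of columns of the subarray `P^(s)` (columns of `P` containing `s`). -/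
def pdaColsOf (P : α → κ → Option σ) (s : σ) : Finset κ :=
  Finset.univ.filter fun k => ∃ f, P f k = some s

/-- `𝒫^{(s)}_f`: the columns of `P^(s)` whose entry in row `f` is an integer. -/
def pdaIntCols (P : α → κ → Option σ) (s : σ) (f : α) : Finset κ :=
  (pdaColsOf P s).filter fun k => P f k ≠ none

/-- A `(G,L,K,F,Z,S)` MIMO placement delivery array: an `F × K` array over `'*'` and
`S` distinct integer symbols satisfying conditions C1–C4. -/
def IsMIMOPDA (G L K F Z S : ℕ) (P : α → κ → Option σ) : Prop :=
  Fintype.card α = F ∧ Fintype.card κ = K ∧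
  -- C2: exactly `S` distinct integers occur, each at least once
  (pdaSymbols P).card = S ∧
  -- C1: each column contains exactly `Z` stars
  (∀ k : κ, (Finset.univ.filter fun f : α => P f k = none).card = Z) ∧
  -- C3: each integer occurs at most `G` times in each column
  (∀ (s : σ) (k : κ), (Finset.univ.filter fun f : α => P f k = some s).card ≤ G) ∧
  -- C4 (a)
  (∀ (s : σ) (f : α), (∃ k, P f k = some s) → (pdaIntCols P s f).card ≤ cdiv L G) ∧
  -- C4 (b)
  (∀ (s : σ) (k : κ) (T : Finset α), T.card = modRes L G + 1 →
    (∀ f ∈ T, P f k = some s) →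
    ∃ f ∈ T, ∃ f' ∈ T, pdaIntCols P s f ≠ pdaIntCols P s f')

/-- The consistency number of an array. -/
noncomputable def consistNum (P : α → κ → Option σ) : ℕ :=
  sSup {μ : ℕ | ∃ (s : σ) (k : κ) (T : Finset α), T.card = μ ∧
    (∀ f ∈ T, P f k = some s) ∧
    ∀ f ∈ T, ∀ f' ∈ T, pdaIntCols P s f = pdaIntCols P s f'}

end PDA

/-- The sum-DoF `K (F - Z) / S` as a rational number. -/
def sumDoF (K F Z S : ℕ) : ℚ := ((K * (F - Z) : ℕ) : ℚ) / (S : ℚ)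
section Aux
open Finset
lemma sq_sum_identity {ι : Type*} (s : Finset ι) (g : ι → ℤ) :
    ∑ i ∈ s, ∑ j ∈ s, (g i - g j)^2
      = 2 * ((s.card : ℤ) * ∑ i ∈ s, g i^2 - (∑ i ∈ s, g i)^2) := by
  have h1 : ∀ i ∈ s, ∑ j ∈ s, (g i - g j)^2
      = (s.card : ℤ) * g i^2 - 2 * g i * ∑ j ∈ s, g j + ∑ j ∈ s, g j^2 := by
    intro i _
    have : ∀ j ∈ s, (g i - g j)^2 = g i^2 - 2 * g i * g j + g j^2 := by
      intro j _; ring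
    rw [Finset.sum_congr rfl this, Finset.sum_add_distrib, Finset.sum_sub_distrib,
      Finset.sum_const, ← Finset.mul_sum]
    ring
  rw [Finset.sum_congr rfl h1, Finset.sum_add_distrib, Finset.sum_sub_distrib,
    Finset.sum_const, ← Finset.mul_sum, ← Finset.sum_mul, ← Finset.mul_sum]
  ring

lemma cs_nat {ι : Type*} (s : Finset ι) (f : ι → ℕ) :
    (∑ i ∈ s, f i) * (∑ i ∈ s, f i) ≤ s.card * ∑ i ∈ s, f i * f i := by
  have h := sq_sum_identity s (fun i => (f i : ℤ))
  have hnn : (0:ℤ) ≤ ∑ i ∈ s, ∑ j ∈ s, ((f i : ℤ) - f j)^2 :=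
    Finset.sum_nonneg fun i _ => Finset.sum_nonneg fun j _ => sq_nonneg _
  rw [h] at hnn
  have hsq : ∑ i ∈ s, (f i:ℤ)^2 = ∑ i ∈ s, (f i:ℤ)*(f i:ℤ) := by
    apply Finset.sum_congr rfl; intro i _; ring
  rw [hsq] at hnn
  zify
  nlinarith [hnn]

lemma cs_eq {ι : Type*} (s : Finset ι) (f : ι → ℕ)
    (h : s.card * ∑ i ∈ s, f i * f i = (∑ i ∈ s, f i) * (∑ i ∈ s, f i)) :
    ∀ i ∈ s, f i * s.card = ∑ j ∈ s, f j := by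
  have hz : ∑ i ∈ s, ∑ j ∈ s, ((f i : ℤ) - f j)^2 = 0 := by
    rw [sq_sum_identity]
    have h' : (s.card : ℤ) * ∑ i ∈ s, (f i:ℤ)^2 = (∑ i ∈ s, (f i:ℤ))^2 := by
      have := congrArg (Nat.cast : ℕ → ℤ) h
      push_cast at this
      have hsq : ∑ i ∈ s, (f i:ℤ)^2 = ∑ i ∈ s, (f i:ℤ)*(f i:ℤ) := by
        apply Finset.sum_congr rfl; intro i _; ring
      rw [hsq]
      nlinarith [this]
    rw [h']; ring
  have hkey : ∀ i ∈ s, ∀ j ∈ s, (f i : ℤ) = f j := by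
    intro i hi j hj
    have h1 := (Finset.sum_eq_zero_iff_of_nonneg
      (fun i _ => Finset.sum_nonneg fun j _ => sq_nonneg ((f i:ℤ) - f j))).mp hz i hi
    have h2 := (Finset.sum_eq_zero_iff_of_nonneg
      (fun j _ => sq_nonneg ((f i:ℤ) - f j))).mp h1 j hj
    have := sq_eq_zero_iff.mp h2
    linarith [this]
  intro i hi
  have : ∑ j ∈ s, f j = ∑ j ∈ s, f i := by
    apply Finset.sum_congr rfl
    intro j hj
    exact_mod_cast (hkey j hj i hi)
  rw [this, Finset.sum_const, smul_eq_mul, Nat.mul_comm]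

lemma card_filter_prod_left {α κ : Type*} [Fintype α] [Fintype κ] (Q : α → κ → Prop)
    [∀ a b, Decidable (Q a b)] :
    ((Finset.univ : Finset (α × κ)).filter fun p => Q p.1 p.2).card
      = ∑ f : α, ((Finset.univ : Finset κ).filter fun k => Q f k).card := by
  simp only [Finset.card_filter]
  rw [← Finset.univ_product_univ, Finset.sum_product]

lemma card_filter_prod_right {α κ : Type*} [Fintype α] [Fintype κ] (Q : α → κ → Prop)
    [∀ a b, Decidable (Q a b)] :
    ((Finset.univ : Finset (α × κ)).filter fun p => Q p.1 p.2).card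
      = ∑ k : κ, ((Finset.univ : Finset α).filter fun f => Q f k).card := by
  simp only [Finset.card_filter]
  rw [← Finset.univ_product_univ, Finset.sum_product_right]

lemma sum_filter_prod_fst {α κ : Type*} [Fintype α] [Fintype κ] (Q : α → κ → Prop)
    [∀ a b, Decidable (Q a b)] (g : α → ℕ) :
    ∑ p ∈ ((Finset.univ : Finset (α × κ)).filter fun p => Q p.1 p.2), g p.1
      = ∑ f : α, ((Finset.univ : Finset κ).filter fun k => Q f k).card * g f := by
  rw [Finset.sum_filter, ← Finset.univ_product_univ, Finset.sum_product]
  apply Finset.sum_congr rfl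
  intro f _
  rw [← Finset.sum_filter]
  have : ∑ a ∈ Finset.univ.filter (fun a => Q (f,a).1 (f,a).2), g (f,a).1
      = ∑ a ∈ Finset.univ.filter (fun k => Q f k), g f := rfl
  rw [this, Finset.sum_const, smul_eq_mul]

lemma mem_pdaSymbols {α κ σ : Type*} [Fintype α] [Fintype κ] [DecidableEq σ]
    {P : α → κ → Option σ} {s : σ} :
    s ∈ pdaSymbols P ↔ ∃ f k, P f k = some s := by
  simp [pdaSymbols, Option.mem_toFinset, Option.mem_def]

section MainAux

open Finset

variable {α κ σ : Type*} [Fintype α] [Fintype κ] [DecidableEq σ]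

/-- number of occurrences of symbol `s` in `P`. -/
def occCard (P : α → κ → Option σ) (s : σ) : ℕ :=
  ((Finset.univ : Finset (α × κ)).filter fun p => P p.1 p.2 = some s).card

/-- number of integer entries in row `f`. -/
def rowIntCard (P : α → κ → Option σ) (f : α) : ℕ :=
  ((Finset.univ : Finset κ).filter fun k => P f k ≠ none).card

/-- number of occurrences of `s` in column `k`. -/
def colCard (P : α → κ → Option σ) (s : σ) (k : κ) : ℕ :=
  ((Finset.univ : Finset α).filter fun f => P f k = some s).card

/-- the set of integer entries of `P`. -/
def intEntries (P : α → κ → Option σ) : Finset (α × κ) :=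
  (Finset.univ : Finset (α × κ)).filter fun p => P p.1 p.2 ≠ none

/-- weight of an entry: the occurrence count of its symbol. -/
def wOcc (P : α → κ → Option σ) (p : α × κ) : ℕ :=
  (P p.1 p.2).elim 0 (occCard P)

end MainAux

end Aux

/-- if a `(G,L,K,F,Z,S)` MIMO-PDA `P` attains the sum-DoF upper
bound, i.e. `K(F-Z)/S = GKZ/F + G⌈L/G⌉`, then (i) every integer occurs exactly
`K(F-Z)/S` times; (ii) every integer occurs exactly `G` times in every column where
it occurs; (iii) for every `s`, every row of `P^(s)` has exactly `⌈L/G⌉` integer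
entries; (iv) every row of `P` has exactly `K(F-Z)/F` integer entries. -/
theorem statement7 {α κ σ : Type*} [Fintype α] [Fintype κ] [DecidableEq σ]
    (G L K F Z S : ℕ) (hG : 0 < G) (hL : 0 < L) (hK : 0 < K)
    (hF : 0 < F) (hZ : 0 < Z) (hS : 0 < S)
    (P : α → κ → Option σ) (hP : IsMIMOPDA G L K F Z S P)
    (hopt : sumDoF K F Z S = (G : ℚ) * K * Z / F + (G : ℚ) * (cdiv L G : ℚ)) :
    (∀ s ∈ pdaSymbols P,
      ((Finset.univ : Finset (α × κ)).filter fun p => P p.1 p.2 = some s).card * S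
        = K * (F - Z)) ∧
    (∀ s ∈ pdaSymbols P, ∀ k : κ, (∃ f, P f k = some s) →
      ((Finset.univ : Finset α).filter fun f => P f k = some s).card = G) ∧
    (∀ s ∈ pdaSymbols P, ∀ f : α, (∃ k, P f k = some s) →
      (pdaIntCols P s f).card = cdiv L G) ∧
    (∀ f : α,
      ((Finset.univ : Finset κ).filter fun k => P f k ≠ none).card * F
        = K * (F - Z)) := by
  
  classical
  obtain ⟨hFc, hKc, hSc, hC1, hC3, hC4a, hC4b⟩ := hP
  have hκne : Nonempty κ := Fintype.card_pos_iff.mp (by rw [hKc]; exact hK)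
  have hZF : Z ≤ F := by
    obtain ⟨k⟩ := hκne
    calc Z = _ := (hC1 k).symm
    _ ≤ Fintype.card α := Finset.card_filter_le _ _
    _ = F := hFc
  have hrK : ∀ f, rowIntCard P f ≤ K := fun f => by
    rw [← hKc]; exact Finset.card_filter_le _ _
  have hstars : ∀ f : α, ((Finset.univ : Finset κ).filter fun k => P f k = none).card
      = K - rowIntCard P f := by
    intro f
    have h1 := Finset.card_filter_add_card_filter_not
      (s := (Finset.univ : Finset κ)) (p := fun k => P f k = none)
    have h2 : ((Finset.univ : Finset κ).filter fun k => ¬ P f k = none).card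
        = rowIntCard P f := rfl
    have h3 : ((Finset.univ : Finset κ)).card = K := by rw [Finset.card_univ, hKc]
    omega
  have hcolint : ∀ k : κ,
      ((Finset.univ : Finset α).filter fun f => P f k ≠ none).card = F - Z := by
    intro k
    have h1 := Finset.card_filter_add_card_filter_not
      (s := (Finset.univ : Finset α)) (p := fun f => P f k = none)
    have h2 : ((Finset.univ : Finset α).filter fun f => ¬ P f k = none).card
        = ((Finset.univ : Finset α).filter fun f => P f k ≠ none).card := rfl
    have h3 : ((Finset.univ : Finset α)).card = F := by rw [Finset.card_univ, hFc]
    have h4 := hC1 k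
    omega
  have hsumr : ∑ f : α, rowIntCard P f = K * (F - Z) := by
    have h1 : (intEntries P).card = ∑ f : α, rowIntCard P f :=
      card_filter_prod_left (fun f k => P f k ≠ none)
    have h2 : (intEntries P).card
        = ∑ k : κ, ((Finset.univ : Finset α).filter fun f => P f k ≠ none).card :=
      card_filter_prod_right (fun f k => P f k ≠ none)
    rw [← h1, h2, Finset.sum_congr rfl (fun k _ => hcolint k), Finset.sum_const,
      smul_eq_mul, Finset.card_univ, hKc]
  have hTbi : intEntries P = (pdaSymbols P).biUnion
      (fun s => (Finset.univ : Finset (α × κ)).filter fun p => P p.1 p.2 = some s) := by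
    ext p
    simp only [intEntries, Finset.mem_filter, Finset.mem_biUnion, Finset.mem_univ, true_and]
    constructor
    · intro h
      cases hpk : P p.1 p.2 with
      | none => exact absurd hpk h
      | some s => exact ⟨s, mem_pdaSymbols.mpr ⟨p.1, p.2, hpk⟩, rfl⟩
    · rintro ⟨s, _, h⟩
      rw [h]; exact Option.some_ne_none s
  have hdisj : ∀ x ∈ pdaSymbols P, ∀ y ∈ pdaSymbols P, x ≠ y →
      Disjoint ((Finset.univ : Finset (α × κ)).filter fun p => P p.1 p.2 = some x)
        ((Finset.univ : Finset (α × κ)).filter fun p => P p.1 p.2 = some y) := by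
    intro x _ y _ hxy
    rw [Finset.disjoint_left]
    intro p hp hq
    simp only [Finset.mem_filter] at hp hq
    rw [hp.2] at hq
    exact hxy (Option.some.inj hq.2)
  have hsumn : ∑ s ∈ pdaSymbols P, occCard P s = K * (F - Z) := by
    calc ∑ s ∈ pdaSymbols P, occCard P s
        = ((pdaSymbols P).biUnion
            (fun s => (Finset.univ : Finset (α × κ)).filter fun p => P p.1 p.2 = some s)).card :=
          (Finset.card_biUnion hdisj).symm
    _ = (intEntries P).card := by rw [hTbi]
    _ = ∑ f : α, rowIntCard P f := card_filter_prod_left (fun f k => P f k ≠ none)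
    _ = K * (F - Z) := hsumr
  have hncolC : ∀ s : σ, occCard P s = ∑ k ∈ pdaColsOf P s, colCard P s k := by
    intro s
    have h1 : occCard P s = ∑ k : κ, colCard P s k :=
      card_filter_prod_right (fun f k => P f k = some s)
    rw [h1]
    symm
    apply Finset.sum_subset (Finset.subset_univ _)
    intro k _ hk
    simp only [pdaColsOf, Finset.mem_filter, Finset.mem_univ, true_and] at hk
    push_neg at hk
    unfold colCard
    rw [Finset.card_eq_zero, Finset.filter_eq_empty_iff]
    intro f _
    exact hk f
  have hnleG : ∀ s : σ, occCard P s ≤ G * (pdaColsOf P s).card := by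
    intro s
    rw [hncolC s]
    calc ∑ k ∈ pdaColsOf P s, colCard P s k ≤ ∑ _k ∈ pdaColsOf P s, G :=
      Finset.sum_le_sum (fun k _ => hC3 s k)
    _ = (pdaColsOf P s).card * G := by rw [Finset.sum_const, smul_eq_mul]
    _ = G * (pdaColsOf P s).card := Nat.mul_comm _ _
  have hCsle : ∀ (s : σ) (f : α),
      (pdaColsOf P s).card ≤ (K - rowIntCard P f) + (pdaIntCols P s f).card := by
    intro s f
    have hsplit := Finset.card_filter_add_card_filter_not
      (s := pdaColsOf P s) (p := fun k => P f k = none)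
    have h1 : ((pdaColsOf P s).filter fun k => ¬ P f k = none).card
        = (pdaIntCols P s f).card := rfl
    have h2 : ((pdaColsOf P s).filter fun k => P f k = none).card ≤ K - rowIntCard P f := by
      rw [← hstars f]
      apply Finset.card_le_card
      intro k hk
      simp only [Finset.mem_filter] at hk ⊢
      exact ⟨Finset.mem_univ k, hk.2⟩
    omega
  have hterm : ∀ (s : σ) (f : α), (∃ k, P f k = some s) →
      occCard P s ≤ G * ((K - rowIntCard P f) + cdiv L G) := by
    intro s f hf
    calc occCard P s ≤ G * (pdaColsOf P s).card := hnleG s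
    _ ≤ G * ((K - rowIntCard P f) + (pdaIntCols P s f).card) :=
      Nat.mul_le_mul_left _ (hCsle s f)
    _ ≤ G * ((K - rowIntCard P f) + cdiv L G) :=
      Nat.mul_le_mul_left _ (Nat.add_le_add_left (hC4a s f hf) _)
  have hAw : ∑ s ∈ pdaSymbols P, occCard P s * occCard P s
      = ∑ p ∈ intEntries P, wOcc P p := by
    rw [hTbi, Finset.sum_biUnion (fun x hx y hy hxy => hdisj x hx y hy hxy)]
    apply Finset.sum_congr rfl
    intro s _
    have : ∀ p ∈ ((Finset.univ : Finset (α × κ)).filter fun p => P p.1 p.2 = some s),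
        wOcc P p = occCard P s := by
      intro p hp
      simp only [Finset.mem_filter] at hp
      simp [wOcc, hp.2]
    rw [Finset.sum_congr rfl this, Finset.sum_const, smul_eq_mul]
    rfl
  have hBsum : ∑ p ∈ intEntries P, G * ((K - rowIntCard P p.1) + cdiv L G)
      = ∑ f : α, rowIntCard P f * (G * ((K - rowIntCard P f) + cdiv L G)) :=
    sum_filter_prod_fst (fun f k => P f k ≠ none)
      (fun f => G * ((K - rowIntCard P f) + cdiv L G))
  have hB1 : ∑ f : α, rowIntCard P f * (G * ((K - rowIntCard P f) + cdiv L G))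
      = G * ((∑ f : α, rowIntCard P f * (K - rowIntCard P f)) + cdiv L G * (K * (F - Z))) := by
    have h : ∀ f ∈ (Finset.univ : Finset α),
        rowIntCard P f * (G * ((K - rowIntCard P f) + cdiv L G))
          = G * (rowIntCard P f * (K - rowIntCard P f)) + (G * cdiv L G) * rowIntCard P f :=
      fun f _ => by ring
    rw [Finset.sum_congr rfl h, Finset.sum_add_distrib, ← Finset.mul_sum, ← Finset.mul_sum,
      hsumr]
    ring
  have hWQ : (∑ f : α, rowIntCard P f * (K - rowIntCard P f))
      + (∑ f : α, rowIntCard P f * rowIntCard P f) = K * (K * (F - Z)) := by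
    rw [← Finset.sum_add_distrib]
    have h : ∀ f ∈ (Finset.univ : Finset α),
        rowIntCard P f * (K - rowIntCard P f) + rowIntCard P f * rowIntCard P f
          = rowIntCard P f * K := by
      intro f _
      rw [← Nat.mul_add, Nat.sub_add_cancel (hrK f)]
    rw [Finset.sum_congr rfl h, ← Finset.sum_mul, hsumr, Nat.mul_comm]
  have hwle : ∀ p ∈ intEntries P, wOcc P p ≤ G * ((K - rowIntCard P p.1) + cdiv L G) := by
    intro p hp
    simp only [intEntries, Finset.mem_filter] at hp
    cases hpk : P p.1 p.2 with
    | none => exact absurd hpk hp.2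
    | some s =>
      have hw : wOcc P p = occCard P s := by simp [wOcc, hpk]
      rw [hw]
      exact hterm s p.1 ⟨p.2, hpk⟩
  have hCS1 : (K * (F - Z)) * (K * (F - Z))
      ≤ S * ∑ s ∈ pdaSymbols P, occCard P s * occCard P s := by
    have h := cs_nat (pdaSymbols P) (occCard P)
    rw [hsumn, hSc] at h
    exact h
  have hCS2 : (K * (F - Z)) * (K * (F - Z))
      ≤ F * ∑ f : α, rowIntCard P f * rowIntCard P f := by
    have h := cs_nat (Finset.univ : Finset α) (rowIntCard P)
    rw [hsumr, Finset.card_univ, hFc] at h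
    exact h
  have hoptN : (K * (F - Z)) * F = S * (G * K * Z + G * cdiv L G * F) := by
    have hS0 : (S : ℚ) ≠ 0 := Nat.cast_ne_zero.mpr hS.ne'
    have hF0 : (F : ℚ) ≠ 0 := Nat.cast_ne_zero.mpr hF.ne'
    unfold sumDoF at hopt
    field_simp at hopt
    have hq : ((K * (F - Z) : ℕ) : ℚ) * F = S * (G * K * Z + G * (cdiv L G) * F) := by
      push_cast [Nat.cast_sub hZF] at hopt ⊢
      linear_combination hopt
    exact_mod_cast hq
  have hKZR : K * (K * (F - Z)) * F
      = (K * (F - Z)) * (K * Z) + (K * (F - Z)) * (K * (F - Z)) := by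
    have h1 : K * Z + K * (F - Z) = K * F := by
      rw [← Nat.mul_add, Nat.add_sub_cancel' hZF]
    calc K * (K * (F - Z)) * F = (K * (F - Z)) * (K * F) := by ring
    _ = (K * (F - Z)) * (K * Z + K * (F - Z)) := by rw [h1]
    _ = _ := by ring
  have hle3 : F * (∑ f : α, rowIntCard P f * (K - rowIntCard P f))
      ≤ (K * (F - Z)) * (K * Z) := by
    have h1 : F * (∑ f : α, rowIntCard P f * (K - rowIntCard P f))
        + (K * (F - Z)) * (K * (F - Z)) ≤ K * (K * (F - Z)) * F := by
      calc F * (∑ f : α, rowIntCard P f * (K - rowIntCard P f))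
            + (K * (F - Z)) * (K * (F - Z))
          ≤ F * (∑ f : α, rowIntCard P f * (K - rowIntCard P f))
            + F * ∑ f : α, rowIntCard P f * rowIntCard P f := by
            exact Nat.add_le_add_left hCS2 _
      _ = F * ((∑ f : α, rowIntCard P f * (K - rowIntCard P f))
            + ∑ f : α, rowIntCard P f * rowIntCard P f) := by ring
      _ = F * (K * (K * (F - Z))) := by rw [hWQ]
      _ = K * (K * (F - Z)) * F := by ring
    rw [hKZR] at h1
    omega
  have hle1 : ∑ s ∈ pdaSymbols P, occCard P s * occCard P s
      ≤ G * ((∑ f : α, rowIntCard P f * (K - rowIntCard P f)) + cdiv L G * (K * (F - Z))) := by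
    rw [hAw]
    calc ∑ p ∈ intEntries P, wOcc P p
        ≤ ∑ p ∈ intEntries P, G * ((K - rowIntCard P p.1) + cdiv L G) :=
          Finset.sum_le_sum hwle
    _ = ∑ f : α, rowIntCard P f * (G * ((K - rowIntCard P f) + cdiv L G)) := hBsum
    _ = _ := hB1
  -- the main equality chain
  have hup : F * (S * (G * ((∑ f : α, rowIntCard P f * (K - rowIntCard P f))
      + cdiv L G * (K * (F - Z)))))
      ≤ F * ((K * (F - Z)) * (K * (F - Z))) := by
    calc F * (S * (G * ((∑ f : α, rowIntCard P f * (K - rowIntCard P f))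
        + cdiv L G * (K * (F - Z)))))
        = S * G * (F * (∑ f : α, rowIntCard P f * (K - rowIntCard P f)))
          + S * G * (cdiv L G * (K * (F - Z)) * F) := by ring
    _ ≤ S * G * ((K * (F - Z)) * (K * Z))
          + S * G * (cdiv L G * (K * (F - Z)) * F) :=
        Nat.add_le_add_right (Nat.mul_le_mul_left _ hle3) _
    _ = (K * (F - Z)) * (S * (G * K * Z + G * cdiv L G * F)) := by ring
    _ = (K * (F - Z)) * ((K * (F - Z)) * F) := by rw [← hoptN]
    _ = F * ((K * (F - Z)) * (K * (F - Z))) := by ring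
  have hFSA : F * (S * ∑ s ∈ pdaSymbols P, occCard P s * occCard P s)
      = F * ((K * (F - Z)) * (K * (F - Z))) := by
    apply le_antisymm
    · calc F * (S * ∑ s ∈ pdaSymbols P, occCard P s * occCard P s)
          ≤ F * (S * (G * ((∑ f : α, rowIntCard P f * (K - rowIntCard P f))
              + cdiv L G * (K * (F - Z))))) :=
            Nat.mul_le_mul_left _ (Nat.mul_le_mul_left _ hle1)
      _ ≤ _ := hup
    · exact Nat.mul_le_mul_left _ hCS1
  have hSA : S * ∑ s ∈ pdaSymbols P, occCard P s * occCard P s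
      = (K * (F - Z)) * (K * (F - Z)) := Nat.eq_of_mul_eq_mul_left hF hFSA
  have hmid : F * (S * (G * ((∑ f : α, rowIntCard P f * (K - rowIntCard P f))
      + cdiv L G * (K * (F - Z)))))
      = F * ((K * (F - Z)) * (K * (F - Z))) := by
    apply le_antisymm hup
    calc F * ((K * (F - Z)) * (K * (F - Z)))
        = F * (S * ∑ s ∈ pdaSymbols P, occCard P s * occCard P s) := hFSA.symm
    _ ≤ _ := Nat.mul_le_mul_left _ (Nat.mul_le_mul_left _ hle1)
  have hAeq : ∑ s ∈ pdaSymbols P, occCard P s * occCard P s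
      = G * ((∑ f : α, rowIntCard P f * (K - rowIntCard P f))
          + cdiv L G * (K * (F - Z))) := by
    apply Nat.eq_of_mul_eq_mul_left hS
    apply Nat.eq_of_mul_eq_mul_left hF
    rw [hmid, hFSA]
  have hFW : F * (∑ f : α, rowIntCard P f * (K - rowIntCard P f))
      = (K * (F - Z)) * (K * Z) := by
    have h1 : S * G * (F * (∑ f : α, rowIntCard P f * (K - rowIntCard P f)))
        + S * G * (cdiv L G * (K * (F - Z)) * F)
        = S * G * ((K * (F - Z)) * (K * Z))
          + S * G * (cdiv L G * (K * (F - Z)) * F) := by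
      calc S * G * (F * (∑ f : α, rowIntCard P f * (K - rowIntCard P f)))
          + S * G * (cdiv L G * (K * (F - Z)) * F)
          = F * (S * (G * ((∑ f : α, rowIntCard P f * (K - rowIntCard P f))
              + cdiv L G * (K * (F - Z))))) := by ring
      _ = F * ((K * (F - Z)) * (K * (F - Z))) := hmid
      _ = (K * (F - Z)) * ((K * (F - Z)) * F) := by ring
      _ = (K * (F - Z)) * (S * (G * K * Z + G * cdiv L G * F)) := by rw [hoptN]
      _ = S * G * ((K * (F - Z)) * (K * Z))
            + S * G * (cdiv L G * (K * (F - Z)) * F) := by ring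
    have h2 := Nat.add_right_cancel h1
    exact Nat.eq_of_mul_eq_mul_left (Nat.mul_pos hS hG) h2
  have hFQ : F * (∑ f : α, rowIntCard P f * rowIntCard P f)
      = (K * (F - Z)) * (K * (F - Z)) := by
    have h1 : F * (∑ f : α, rowIntCard P f * (K - rowIntCard P f))
        + F * (∑ f : α, rowIntCard P f * rowIntCard P f)
        = K * (K * (F - Z)) * F := by
      calc F * (∑ f : α, rowIntCard P f * (K - rowIntCard P f))
          + F * (∑ f : α, rowIntCard P f * rowIntCard P f)
          = F * ((∑ f : α, rowIntCard P f * (K - rowIntCard P f))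
              + (∑ f : α, rowIntCard P f * rowIntCard P f)) := by ring
      _ = F * (K * (K * (F - Z))) := by rw [hWQ]
      _ = K * (K * (F - Z)) * F := by ring
    rw [hFW, hKZR] at h1
    exact Nat.add_left_cancel h1
  have htermeq : ∀ p ∈ intEntries P,
      wOcc P p = G * ((K - rowIntCard P p.1) + cdiv L G) := by
    have hsum_eq : ∑ p ∈ intEntries P, wOcc P p
        = ∑ p ∈ intEntries P, G * ((K - rowIntCard P p.1) + cdiv L G) := by
      calc ∑ p ∈ intEntries P, wOcc P p
          = ∑ s ∈ pdaSymbols P, occCard P s * occCard P s := hAw.symm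
      _ = G * ((∑ f : α, rowIntCard P f * (K - rowIntCard P f))
            + cdiv L G * (K * (F - Z))) := hAeq
      _ = ∑ f : α, rowIntCard P f * (G * ((K - rowIntCard P f) + cdiv L G)) := hB1.symm
      _ = ∑ p ∈ intEntries P, G * ((K - rowIntCard P p.1) + cdiv L G) := hBsum.symm
    exact fun p hp => (Finset.sum_eq_sum_iff_of_le hwle).mp hsum_eq p hp
  have hkeyocc : ∀ (s : σ) (f : α) (k : κ), P f k = some s →
      occCard P s = G * (pdaColsOf P s).card ∧
      (pdaColsOf P s).card = (K - rowIntCard P f) + cdiv L G := by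
    intro s f k hfk
    have hpT : (f, k) ∈ intEntries P := by
      simp only [intEntries, Finset.mem_filter, Finset.mem_univ, true_and]
      rw [hfk]; exact Option.some_ne_none s
    have heq := htermeq (f, k) hpT
    have hwp : wOcc P (f, k) = occCard P s := by simp [wOcc, hfk]
    have h1 : occCard P s = G * ((K - rowIntCard P f) + cdiv L G) := by
      rw [← hwp, heq]
    have h3 := hCsle s f
    have h4 := hC4a s f ⟨k, hfk⟩
    have hupb : (pdaColsOf P s).card ≤ (K - rowIntCard P f) + cdiv L G :=
      le_trans h3 (Nat.add_le_add_left h4 _)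
    constructor
    · apply le_antisymm (hnleG s)
      rw [h1]
      exact Nat.mul_le_mul_left _ hupb
    · apply le_antisymm hupb
      have h5 := hnleG s
      rw [h1] at h5
      exact Nat.le_of_mul_le_mul_left h5 hG
  refine ⟨?_, ?_, ?_, ?_⟩
  · intro s hs
    have h := cs_eq (pdaSymbols P) (occCard P)
      (by rw [hSc, hsumn]; exact hSA) s hs
    rw [hSc, hsumn] at h
    exact h
  · intro s hs k hk
    obtain ⟨f, hfk⟩ := hk
    obtain ⟨hocc, _⟩ := hkeyocc s f k hfk
    have hsum : ∑ k' ∈ pdaColsOf P s, colCard P s k' = ∑ _k' ∈ pdaColsOf P s, G := by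
      rw [← hncolC s, hocc, Finset.sum_const, smul_eq_mul, Nat.mul_comm]
    have hkC : k ∈ pdaColsOf P s := by
      simp only [pdaColsOf, Finset.mem_filter, Finset.mem_univ, true_and]
      exact ⟨f, hfk⟩
    exact (Finset.sum_eq_sum_iff_of_le (fun k' _ => hC3 s k')).mp hsum k hkC
  · intro s hs f hf
    obtain ⟨k, hfk⟩ := hf
    obtain ⟨hocc, hcs⟩ := hkeyocc s f k hfk
    have h3 := hCsle s f
    have h4 := hC4a s f ⟨k, hfk⟩
    have h5 : (K - rowIntCard P f) + cdiv L G
        ≤ (K - rowIntCard P f) + (pdaIntCols P s f).card := hcs ▸ h3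
    exact le_antisymm h4 (Nat.le_of_add_le_add_left h5)
  · intro f
    have h := cs_eq (Finset.univ : Finset α) (rowIntCard P)
      (by rw [Finset.card_univ, hFc, hsumr]; exact hFQ) f (Finset.mem_univ f)
    rw [Finset.card_univ, hFc, hsumr] at h
    exact h
end

section
/- Let P be a (G, L₁, K₁, F, Z, S) MIMO-PDA in which every integer of [S] occurs exactly G(t₁ + ⌈L₁/G⌉) times, where t₁ = K₁Z/F is a positive integer, and let μ be its consistency number. For any positive integers m and L with m⌈L₁/G⌉ = ⌈L/G⌉ and μ ≤ ⟨L⟩_G, the F × mK₁ array Q defined by Q(f, k) = P(f, ⟨k⟩_{K₁}) for f ∈ [F] and k ∈ [mK₁] (i.e., m horizontal copies of P) satisfies condition (C4) of the MIMO-PDA definition with respect to the parameter L: for each integer s, every row of the subarray Q^(s) contains exactly m⌈L₁/G⌉ = ⌈L/G⌉ integer entries, and among any ⟨L⟩_G + 1 rows of Q^(s) sharing the entry s in a common column, two have different integer-entry column sets. -/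
open Finset

/-- The `F × (m·K₁)` array obtained by concatenating `m` copies of `P` horizontally. -/
def hcopies {F K₁ : ℕ} {σ : Type*} (m : ℕ) (hK₁ : 0 < K₁)
    (P : Fin F → Fin K₁ → Option σ) (f : Fin F) (k : Fin (m * K₁)) : Option σ :=
  P f ⟨k.val % K₁, Nat.mod_lt _ hK₁⟩

section Aux

set_option linter.unusedSectionVars false

variable {α κ σ : Type*} [Fintype α] [Fintype κ] [DecidableEq κ] [DecidableEq σ]

lemma mem_pdaSymbols_iff (P : α → κ → Option σ) (s : σ) :
    s ∈ pdaSymbols P ↔ ∃ f k, P f k = some s := by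
  simp [pdaSymbols, Option.mem_toFinset, Option.mem_def]

lemma pdaIntCols_subset (P : α → κ → Option σ) (s : σ) (f : α) :
    pdaIntCols P s f ⊆ pdaColsOf P s := Finset.filter_subset _ _

lemma sdiff_subset_stars (P : α → κ → Option σ) (s : σ) (f : α) :
    pdaColsOf P s \ pdaIntCols P s f ⊆ Finset.univ.filter fun k => P f k = none := by
  intro k hk
  rw [Finset.mem_sdiff] at hk
  simp only [Finset.mem_filter, Finset.mem_univ, true_and]
  by_contra hne
  exact hk.2 (by simp [pdaIntCols, hk.1, hne])

lemma occ_eq_sum (P : α → κ → Option σ) (s : σ) :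
    ((Finset.univ : Finset (α × κ)).filter fun p => P p.1 p.2 = some s).card
      = ∑ k : κ, (Finset.univ.filter fun f : α => P f k = some s).card := by
  simp only [Finset.card_filter]
  rw [Fintype.sum_prod_type]
  exact Finset.sum_comm

lemma cols_card_lb {G t h : ℕ} (hG : 0 < G) (P : α → κ → Option σ) (s : σ)
    (hC3 : ∀ k : κ, (Finset.univ.filter fun f : α => P f k = some s).card ≤ G)
    (hocc : ((Finset.univ : Finset (α × κ)).filter fun p => P p.1 p.2 = some s).card
      = G * (t + h)) :
    t + h ≤ (pdaColsOf P s).card := by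
  have h1 : G * (t + h) = ∑ k : κ, (Finset.univ.filter fun f : α => P f k = some s).card := by
    rw [← hocc, occ_eq_sum]
  have h2 : ∑ k : κ, (Finset.univ.filter fun f : α => P f k = some s).card
      = ∑ k ∈ pdaColsOf P s, (Finset.univ.filter fun f : α => P f k = some s).card := by
    refine (Finset.sum_subset (Finset.subset_univ _) ?_).symm
    intro k _ hk
    rw [Finset.card_eq_zero, Finset.filter_eq_empty_iff]
    intro f _
    intro hf
    exact hk (by simp only [pdaColsOf, Finset.mem_filter, Finset.mem_univ, true_and]; exact ⟨f, hf⟩)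
  have h3 : ∑ k ∈ pdaColsOf P s, (Finset.univ.filter fun f : α => P f k = some s).card
      ≤ (pdaColsOf P s).card * G := by
    have := Finset.sum_le_card_nsmul (pdaColsOf P s)
      (fun k => (Finset.univ.filter fun f : α => P f k = some s).card) G (fun k _ => hC3 k)
    simpa using this
  have h4 : G * (t + h) ≤ G * (pdaColsOf P s).card := by
    rw [mul_comm G ((pdaColsOf P s).card)]
    omega
  exact Nat.le_of_mul_le_mul_left h4 hG

/-- Total number of stars equals `(card κ) * Z`. -/
lemma total_stars (P : α → κ → Option σ) (Z : ℕ)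
    (hC1 : ∀ k : κ, (Finset.univ.filter fun f : α => P f k = none).card = Z) :
    ∑ f : α, (Finset.univ.filter fun k : κ => P f k = none).card = Fintype.card κ * Z := by
  have : ∑ f : α, (Finset.univ.filter fun k : κ => P f k = none).card
      = ∑ k : κ, (Finset.univ.filter fun f : α => P f k = none).card := by
    simp only [Finset.card_filter]
    exact Finset.sum_comm
  rw [this]
  simp [hC1, Finset.sum_const, Finset.card_univ]

end Aux

section Copies

variable {σ : Type*} [DecidableEq σ]

/-- The residue map `Fin (m * K₁) → Fin K₁`. -/
def resFin {m K₁ : ℕ} (hK₁ : 0 < K₁) (k : Fin (m * K₁)) : Fin K₁ :=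
  ⟨k.val % K₁, Nat.mod_lt _ hK₁⟩

omit [DecidableEq σ] in
lemma hcopies_eq {F K₁ : ℕ} (m : ℕ) (hK₁ : 0 < K₁) (P : Fin F → Fin K₁ → Option σ)
    (f : Fin F) (k : Fin (m * K₁)) : hcopies m hK₁ P f k = P f (resFin hK₁ k) := rfl

lemma pdaIntCols_hcopies {F K₁ : ℕ} (m : ℕ) (hK₁ : 0 < K₁) (P : Fin F → Fin K₁ → Option σ)
    (s : σ) (f : Fin F) :
    pdaIntCols (hcopies m hK₁ P) s f
      = Finset.univ.filter fun k : Fin (m * K₁) => resFin hK₁ k ∈ pdaIntCols P s f := by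
  ext k
  simp only [pdaIntCols, pdaColsOf, Finset.mem_filter, Finset.mem_univ, true_and]
  simp only [hcopies_eq]

lemma div_lt_of_fin {m K₁ : ℕ} (hK₁ : 0 < K₁) (k : Fin (m * K₁)) : k.val / K₁ < m :=
  (Nat.div_lt_iff_lt_mul hK₁).mpr k.isLt

lemma comb_lt {m K₁ : ℕ} (i : Fin m) (a : Fin K₁) : a.val + i.val * K₁ < m * K₁ := by
  have h1 : a.val + i.val * K₁ < (i.val + 1) * K₁ := by
    have := a.isLt
    rw [Nat.add_mul, Nat.one_mul]
    omega
  exact lt_of_lt_of_le h1 (Nat.mul_le_mul_right K₁ i.isLt)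

lemma card_filter_res {m K₁ : ℕ} (hK₁ : 0 < K₁) (A : Finset (Fin K₁)) :
    (Finset.univ.filter fun k : Fin (m * K₁) => resFin hK₁ k ∈ A).card = m * A.card := by
  have hcard : ((Finset.univ : Finset (Fin m)) ×ˢ A).card = m * A.card := by
    simp
  rw [← hcard]
  refine Finset.card_nbij'
    (fun k => ((⟨k.val / K₁, div_lt_of_fin hK₁ k⟩ : Fin m), resFin hK₁ k))
    (fun p => (⟨p.2.val + p.1.val * K₁, comb_lt p.1 p.2⟩ : Fin (m * K₁))) ?_ ?_ ?_ ?_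
  · intro k hk
    rw [Finset.mem_coe, Finset.mem_filter] at hk
    exact Finset.mem_product.mpr ⟨Finset.mem_univ _, hk.2⟩
  · intro p hp
    rw [Finset.mem_coe, Finset.mem_filter]
    refine ⟨Finset.mem_univ _, ?_⟩
    have hres : resFin hK₁ (⟨p.2.val + p.1.val * K₁, comb_lt p.1 p.2⟩ : Fin (m * K₁)) = p.2 := by
      apply Fin.ext
      simp only [resFin, Nat.add_mul_mod_self_right]
      exact Nat.mod_eq_of_lt p.2.isLt
    rw [hres]
    exact (Finset.mem_product.mp hp).2
  · intro k _
    apply Fin.ext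
    simp only [resFin]
    exact Nat.mod_add_div' k.val K₁
  · intro p _
    have h1 : (p.2.val + p.1.val * K₁) / K₁ = p.1.val := by
      rw [Nat.add_mul_div_right _ _ hK₁, Nat.div_eq_of_lt p.2.isLt]
      omega
    have h2 : (p.2.val + p.1.val * K₁) % K₁ = p.2.val := by
      rw [Nat.add_mul_mod_self_right]
      exact Nat.mod_eq_of_lt p.2.isLt
    obtain ⟨i, a⟩ := p
    simp only [Prod.mk.injEq, resFin]
    exact ⟨Fin.ext h1, Fin.ext h2⟩

end Copies

/-- Appendix D, condition C4 for horizontal copies: let `P` be a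
`(G, L₁, K₁, F, Z, S)` MIMO-PDA in which every integer occurs exactly
`G(t₁ + ⌈L₁/G⌉)` times, with `t₁ = K₁Z/F` a positive integer and consistency number
`μ`. If `m⌈L₁/G⌉ = ⌈L/G⌉` and `μ ≤ ⟨L⟩_G`, then the array `Q` of `m` horizontal
copies of `P` satisfies condition C4 w.r.t. `L`: every row of each subarray `Q^(s)`
has exactly `⌈L/G⌉` integer entries, and among any `⟨L⟩_G + 1` rows of `Q^(s)`
sharing the entry `s` in a common column, two have different integer-entry column
sets. -/
theorem statement16 {σ : Type*} [DecidableEq σ] (G L₁ K₁ F Z S t₁ m L : ℕ)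
    (hG : 0 < G) (hL₁ : 0 < L₁) (hK₁ : 0 < K₁) (hF : 0 < F) (hZ : 0 < Z) (hS : 0 < S)
    (ht₁pos : 0 < t₁) (hm : 0 < m) (hL : 0 < L)
    (P : Fin F → Fin K₁ → Option σ) (hP : IsMIMOPDA G L₁ K₁ F Z S P)
    (ht₁ : t₁ * F = K₁ * Z)
    (hocc : ∀ s ∈ pdaSymbols P,
      ((Finset.univ : Finset (Fin F × Fin K₁)).filter
        fun p => P p.1 p.2 = some s).card = G * (t₁ + cdiv L₁ G))
    (hceil : m * cdiv L₁ G = cdiv L G)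
    (hμ : consistNum P ≤ modRes L G) :
    (∀ (s : σ) (f : Fin F),
      (∃ k, hcopies m hK₁ P f k = some s) →
      (pdaIntCols (hcopies m hK₁ P) s f).card = cdiv L G) ∧
    (∀ (s : σ) (k : Fin (m * K₁)) (T : Finset (Fin F)),
      T.card = modRes L G + 1 →
      (∀ f ∈ T, hcopies m hK₁ P f k = some s) →
      ∃ f ∈ T, ∃ f' ∈ T,
        pdaIntCols (hcopies m hK₁ P) s f ≠ pdaIntCols (hcopies m hK₁ P) s f') := by
  obtain ⟨hcα, hcκ, hsymcard, hC1, hC3, hC4a, hC4b⟩ := hP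
  -- Z ≤ F
  have hZF : Z ≤ F := by
    have h := Finset.card_filter_le (Finset.univ : Finset (Fin F))
      (fun f => P f ⟨0, hK₁⟩ = none)
    rw [hC1 ⟨0, hK₁⟩, Finset.card_univ, Fintype.card_fin] at h
    exact h
  -- t₁ ≤ K₁
  have ht₁K₁ : t₁ ≤ K₁ := by
    have h : t₁ * F ≤ K₁ * F := by rw [ht₁]; exact Nat.mul_le_mul_left K₁ hZF
    exact Nat.le_of_mul_le_mul_right h hF
  -- every row has at least t₁ stars
  have hrowlb : ∀ f : Fin F, t₁ ≤ (Finset.univ.filter fun k => P f k = none).card := by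
    intro f
    by_cases hall : ∀ k, P f k = none
    · have heq : (Finset.univ.filter fun k => P f k = none) = Finset.univ := by
        rw [Finset.filter_eq_self]
        exact fun k _ => hall k
      rw [heq, Finset.card_univ, Fintype.card_fin]
      exact ht₁K₁
    · push_neg at hall
      obtain ⟨k0, hk0⟩ := hall
      obtain ⟨s0, hs0⟩ := Option.ne_none_iff_exists'.mp hk0
      have hsym0 : s0 ∈ pdaSymbols P := (mem_pdaSymbols_iff P s0).mpr ⟨f, k0, hs0⟩
      have hcols := cols_card_lb hG P s0 (fun k => hC3 s0 k) (hocc s0 hsym0)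
      have hIC := hC4a s0 f ⟨k0, hs0⟩
      have hcard := Finset.card_le_card (sdiff_subset_stars P s0 f)
      rw [Finset.card_sdiff_of_subset (pdaIntCols_subset P s0 f)] at hcard
      have hICle := Finset.card_le_card (pdaIntCols_subset P s0 f)
      omega
  -- total star count
  have hsum : ∑ f : Fin F, (Finset.univ.filter fun k => P f k = none).card = t₁ * F := by
    have h := total_stars P Z hC1
    rw [Fintype.card_fin, ← ht₁] at h
    exact h
  -- every row has exactly t₁ stars
  have hrow : ∀ f : Fin F, (Finset.univ.filter fun k => P f k = none).card = t₁ := by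
    intro f
    by_contra hne
    have hgt : t₁ < (Finset.univ.filter fun k => P f k = none).card :=
      lt_of_le_of_ne (hrowlb f) (Ne.symm hne)
    have hconst : ∑ _f : Fin F, t₁ = t₁ * F := by
      simp [Finset.sum_const, Finset.card_univ, mul_comm]
    have hlt : t₁ * F < ∑ f : Fin F, (Finset.univ.filter fun k => P f k = none).card := by
      rw [← hconst]
      exact Finset.sum_lt_sum (fun i _ => hrowlb i) ⟨f, Finset.mem_univ f, hgt⟩
    omega
  -- per-row count of integer entries in P^(s)
  have hPIC : ∀ (s : σ) (f : Fin F), (∃ k, P f k = some s) →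
      (pdaIntCols P s f).card = cdiv L₁ G := by
    rintro s f ⟨k0, hs0⟩
    have hsym0 : s ∈ pdaSymbols P := (mem_pdaSymbols_iff P s).mpr ⟨f, k0, hs0⟩
    have hcols := cols_card_lb hG P s (fun k => hC3 s k) (hocc s hsym0)
    have hIC := hC4a s f ⟨k0, hs0⟩
    have hcard := Finset.card_le_card (sdiff_subset_stars P s f)
    rw [Finset.card_sdiff_of_subset (pdaIntCols_subset P s f), hrow f] at hcard
    have hICle := Finset.card_le_card (pdaIntCols_subset P s f)
    omega
  constructor
  · rintro s f ⟨k0, hk0⟩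
    rw [pdaIntCols_hcopies, card_filter_res, hPIC s f ⟨resFin hK₁ k0, hk0⟩, hceil]
  · intro s k T hTcard hTs
    by_contra hcon
    push_neg at hcon
    have hPeq : ∀ f ∈ T, ∀ f' ∈ T, pdaIntCols P s f = pdaIntCols P s f' := by
      intro f hf f' hf'
      have hQ := hcon f hf f' hf'
      ext j
      have hjlt : (j : ℕ) < m * K₁ := lt_of_lt_of_le j.isLt (Nat.le_mul_of_pos_left K₁ hm)
      have hres : resFin hK₁ (⟨j.val, hjlt⟩ : Fin (m * K₁)) = j :=
        Fin.ext (Nat.mod_eq_of_lt j.isLt)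
      have key : ∀ g : Fin F, j ∈ pdaIntCols P s g ↔
          (⟨j.val, hjlt⟩ : Fin (m * K₁)) ∈ pdaIntCols (hcopies m hK₁ P) s g := by
        intro g
        rw [pdaIntCols_hcopies]
        simp [hres]
      rw [key f, hQ, ← key f']
    have hle : T.card ≤ consistNum P := by
      apply le_csSup
      · refine ⟨F, ?_⟩
        rintro μ ⟨s', k', T', hc, -, -⟩
        have := Finset.card_le_univ T'
        rw [Fintype.card_fin] at this
        omega
      · exact ⟨s, resFin hK₁ k, T, rfl, fun f hf => hTs f hf, hPeq⟩
    omega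
end
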